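/- Whether an initial distribution is sure / almost-sure / limit-sure winning for eventually synchronizing in T (with exact support U) depends only on the support of the distribution: if Supp(d) = Supp(d') then d is winning iff d' is winning, for each of the three modes. -/

import Mathlib

open Finset

structure MDP (Q A : Type) [Fintype Q] [Fintype A] where
  δ : Q → A → Q → ℝ
  nonneg : ∀ q a q', 0 ≤ δ q a q'
  sum_one : ∀ q a, ∑ q', δ q a q' = 1

structure Strat (Q A : Type) [Fintype A] where
  σ : List Q → A → ℝ
  nonneg : ∀ h a, 0 ≤ σ h a
  sum_one : ∀ h, ∑ a, σ h a = 1

variable {Q A : Type} [Fintype Q] [DecidableEq Q] [Fintype A]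

/-- Probability of a path of length `n` (i.e. `n+1` states) from initial
distribution `μ0` under strategy `α`. The history passed to the strategy is
the list of visited states, most recent first. -/
noncomputable def pathProb (M : MDP Q A) (μ0 : Q → ℝ) (α : Strat Q A)
    {n : ℕ} (π : Fin (n + 1) → Q) : ℝ :=
  μ0 (π 0) *
    ∏ i : Fin n,
      ∑ a,
        α.σ (List.ofFn (fun j : Fin (i.1 + 1) =>
            π ⟨i.1 - j.1, lt_of_le_of_lt (Nat.sub_le i.1 j.1) (Nat.lt_succ_of_lt i.isLt)⟩)) a *
          M.δ (π i.castSucc) a (π i.succ)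

/-- Distribution over states after `n` steps. -/
noncomputable def Mdist (M : MDP Q A) (μ0 : Q → ℝ) (α : Strat Q A) (n : ℕ) (q : Q) : ℝ :=
  ∑ π : Fin (n + 1) → Q, if π (Fin.last n) = q then pathProb M μ0 α π else 0

/-- Probability mass in `T` after `n` steps. -/
noncomputable def Mmass (M : MDP Q A) (μ0 : Q → ℝ) (α : Strat Q A) (n : ℕ) (T : Finset Q) : ℝ :=
  ∑ q ∈ T, Mdist M μ0 α n q

open scoped Classical in
/-- Support of the transition `δ(q,a)`. -/
noncomputable def post (M : MDP Q A) (q : Q) (a : A) : Finset Q :=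
  Finset.univ.filter (fun q' => 0 < M.δ q a q')

open scoped Classical in
/-- One-step predecessor operator. -/
noncomputable def PreM (M : MDP Q A) (S : Finset Q) : Finset Q :=
  Finset.univ.filter (fun q => ∃ a, post M q a ⊆ S)

def IsDist (μ : Q → ℝ) : Prop := (∀ q, 0 ≤ μ q) ∧ ∑ q, μ q = 1

def dirac (q0 : Q) : Q → ℝ := fun q => if q = q0 then (1 : ℝ) else 0

def PureStrat (α : Strat Q A) : Prop := ∀ h, ∃ a, α.σ h a = 1

/-! Every path probability is the initial weight of the first state times a factor that does not
depend on the initial distribution. Hence if `d' ≤ C • d` pointwise, the mass `d'` leaves outside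
any set after `n` steps is at most `C` times the mass `d` leaves there, under the same strategy.
Equal supports give such a constant in both directions, so a mass exactly `1` transfers, and a
mass at least `1 - ε / C` under `d` becomes a mass at least `1 - ε` under `d'`. -/

omit [DecidableEq Q] in
lemma sum_mul_δ_nonneg (M : MDP Q A) (α : Strat Q A) (h : List Q) (q q' : Q) :
    0 ≤ ∑ a, α.σ h a * M.δ q a q' :=
  sum_nonneg fun a _ => mul_nonneg (α.nonneg h a) (M.nonneg q a q')

omit [DecidableEq Q] in
lemma sum_sum_mul_δ_eq_one (M : MDP Q A) (α : Strat Q A) (h : List Q) (q : Q) :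
    ∑ q', ∑ a, α.σ h a * M.δ q a q' = 1 := by
  rw [sum_comm]
  simp only [← mul_sum, M.sum_one, mul_one, α.sum_one]

omit [DecidableEq Q] in
lemma pathProb_snoc (M : MDP Q A) (μ0 : Q → ℝ) (α : Strat Q A) {n : ℕ}
    (p : Fin (n + 1) → Q) (x : Q) :
    pathProb M μ0 α (Fin.snoc p x) =
      pathProb M μ0 α p *
        ∑ a, α.σ (List.ofFn fun j => p (Fin.rev j)) a * M.δ (p (Fin.last n)) a x := by
  simp only [pathProb, Fin.prod_univ_castSucc, mul_assoc]
  congr 2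
  · refine prod_congr rfl fun i _ => ?_
    have hi : ∀ k, (i : ℕ) ≤ n + k := fun k => by omega
    simp [Fin.snoc, hi, Fin.castLT, Fin.succ, Fin.castSucc, Fin.castAdd, Fin.castLE]
  · simp [Fin.snoc, Fin.rev]

omit [DecidableEq Q] in
lemma pathProb_nonneg (M : MDP Q A) {μ0 : Q → ℝ} (hμ0 : ∀ q, 0 ≤ μ0 q) (α : Strat Q A)
    {n : ℕ} (π : Fin (n + 1) → Q) : 0 ≤ pathProb M μ0 α π :=
  mul_nonneg (hμ0 _) (prod_nonneg fun _ _ => sum_mul_δ_nonneg M α _ _ _)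

omit [DecidableEq Q] in
lemma pathProb_le_mul (M : MDP Q A) {μ μ' : Q → ℝ} {C : ℝ} (hC : ∀ q, μ' q ≤ C * μ q)
    (α : Strat Q A) {n : ℕ} (π : Fin (n + 1) → Q) :
    pathProb M μ' α π ≤ C * pathProb M μ α π := by
  rw [pathProb, pathProb, ← mul_assoc]
  exact mul_le_mul_of_nonneg_right (hC _) (prod_nonneg fun _ _ => sum_mul_δ_nonneg M α _ _ _)

omit [DecidableEq Q] in
lemma sum_pathProb (M : MDP Q A) (μ0 : Q → ℝ) (α : Strat Q A) (n : ℕ) :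
    ∑ π : Fin (n + 1) → Q, pathProb M μ0 α π = ∑ q, μ0 q := by
  induction n with
  | zero =>
    exact Fintype.sum_equiv (Equiv.funUnique (Fin 1) Q) _ μ0 fun π => by
      simp [pathProb, Equiv.funUnique]
  | succ n ih =>
    rw [← ih, ← Fintype.sum_equiv (Fin.snocEquiv fun _ => Q)
      (fun xp => pathProb M μ0 α (Fin.snoc xp.2 xp.1)) _ fun _ => rfl,
      Fintype.sum_prod_type_right]
    refine sum_congr rfl fun p _ => ?_
    simp only [pathProb_snoc, ← mul_sum, sum_sum_mul_δ_eq_one, mul_one]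

lemma sum_Mdist (M : MDP Q A) (μ0 : Q → ℝ) (α : Strat Q A) (n : ℕ) :
    ∑ q, Mdist M μ0 α n q = ∑ q, μ0 q := by
  simp only [Mdist]
  rw [sum_comm, ← sum_pathProb M μ0 α n]
  simp

lemma Mmass_nonneg (M : MDP Q A) {μ0 : Q → ℝ} (hμ0 : ∀ q, 0 ≤ μ0 q) (α : Strat Q A) (n : ℕ)
    (S : Finset Q) : 0 ≤ Mmass M μ0 α n S :=
  sum_nonneg fun _ _ => sum_nonneg fun π _ => by
    split_ifs
    exacts [pathProb_nonneg M hμ0 α π, le_rfl]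

lemma Mmass_le_mul (M : MDP Q A) {μ μ' : Q → ℝ} {C : ℝ} (hC : ∀ q, μ' q ≤ C * μ q)
    (α : Strat Q A) (n : ℕ) (S : Finset Q) :
    Mmass M μ' α n S ≤ C * Mmass M μ α n S := by
  simp only [Mmass, Mdist, mul_sum]
  refine sum_le_sum fun q _ => sum_le_sum fun π _ => ?_
  split_ifs
  exacts [pathProb_le_mul M hC α π, (mul_zero C).ge]

lemma Mmass_compl (M : MDP Q A) {μ0 : Q → ℝ} (hμ0 : ∑ q, μ0 q = 1) (α : Strat Q A) (n : ℕ)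
    (S : Finset Q) : Mmass M μ0 α n Sᶜ = 1 - Mmass M μ0 α n S := by
  rw [eq_sub_iff_add_eq', Mmass, Mmass, sum_add_sum_compl, sum_Mdist, hμ0]

lemma exists_pos_le_mul_of_pos_imp_pos {ι : Type*} [Fintype ι] {f g : ι → ℝ}
    (hf : ∀ i, 0 ≤ f i) (hg : ∀ i, 0 < g i → 0 < f i) :
    ∃ C, 0 < C ∧ ∀ i, g i ≤ C * f i := by
  refine ⟨1 + ∑ i, |g i / f i|, by positivity, fun i => ?_⟩
  rcases (hf i).lt_or_eq with hfi | hfi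
  · calc g i = g i / f i * f i := (div_mul_cancel₀ _ hfi.ne').symm
      _ ≤ |g i / f i| * f i := mul_le_mul_of_nonneg_right (le_abs_self _) hfi.le
      _ ≤ (1 + ∑ i, |g i / f i|) * f i := by
        gcongr
        exact (single_le_sum (fun j _ => abs_nonneg (g j / f j)) (mem_univ i)).trans
          (le_add_of_nonneg_left zero_le_one)
  · rw [← hfi, mul_zero]
    exact not_lt.mp fun hgi => (hg i hgi).ne hfi

section Transfer

variable {M : MDP Q A} {d d' : Q → ℝ} {C : ℝ} {α : Strat Q A} {n : ℕ} {S : Finset Q}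

lemma one_sub_Mmass_le_mul (hd : ∑ q, d q = 1) (hd' : ∑ q, d' q = 1)
    (hC : ∀ q, d' q ≤ C * d q) : 1 - Mmass M d' α n S ≤ C * (1 - Mmass M d α n S) := by
  simpa only [Mmass_compl M hd, Mmass_compl M hd'] using Mmass_le_mul M hC α n Sᶜ

lemma Mmass_eq_one_of_le_mul (hd : ∑ q, d q = 1) (hd' : IsDist d') (hC : ∀ q, d' q ≤ C * d q)
    (h : Mmass M d α n S = 1) : Mmass M d' α n S = 1 := by
  have hle : 1 - Mmass M d' α n S ≤ C * (1 - Mmass M d α n S) := one_sub_Mmass_le_mul hd hd'.2 hC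
  have hnonneg := Mmass_nonneg M hd'.1 α n Sᶜ
  rw [h, sub_self, mul_zero] at hle
  rw [Mmass_compl M hd'.2] at hnonneg
  linarith

lemma one_sub_le_Mmass_of_le_mul (hd : ∑ q, d q = 1) (hd' : ∑ q, d' q = 1) (hC0 : 0 < C)
    (hC : ∀ q, d' q ≤ C * d q) {ε : ℝ} (h : 1 - ε / C ≤ Mmass M d α n S) :
    1 - ε ≤ Mmass M d' α n S := by
  have : 1 - Mmass M d' α n S ≤ ε :=
    calc 1 - Mmass M d' α n S ≤ C * (1 - Mmass M d α n S) := one_sub_Mmass_le_mul hd hd' hC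
      _ ≤ C * (ε / C) := by gcongr; linarith
      _ = ε := mul_div_cancel₀ ε hC0.ne'
  linarith

end Transfer

def IsSureWinning (M : MDP Q A) (d : Q → ℝ) (T U : Finset Q) : Prop :=
  ∃ (α : Strat Q A) (n : ℕ), Mmass M d α n T = 1 ∧ Mmass M d α n U = 1

def IsAlmostSureWinning (M : MDP Q A) (d : Q → ℝ) (T U : Finset Q) : Prop :=
  ∃ α : Strat Q A, ∀ ε : ℝ, 0 < ε → ∃ n : ℕ, 1 - ε ≤ Mmass M d α n T ∧ Mmass M d α n U = 1

def IsLimitSureWinning (M : MDP Q A) (d : Q → ℝ) (T U : Finset Q) : Prop :=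
  ∀ ε : ℝ, 0 < ε → ∃ (α : Strat Q A) (n : ℕ), 1 - ε ≤ Mmass M d α n T ∧ Mmass M d α n U = 1

section WinningModes

variable {M : MDP Q A} {d d' : Q → ℝ} {C : ℝ} {T U : Finset Q}

lemma IsSureWinning.of_le_mul (hd : ∑ q, d q = 1) (hd' : IsDist d') (hC : ∀ q, d' q ≤ C * d q) :
    IsSureWinning M d T U → IsSureWinning M d' T U := fun ⟨α, n, hT, hU⟩ =>
  ⟨α, n, Mmass_eq_one_of_le_mul hd hd' hC hT, Mmass_eq_one_of_le_mul hd hd' hC hU⟩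

lemma IsAlmostSureWinning.of_le_mul (hd : ∑ q, d q = 1) (hd' : IsDist d') (hC0 : 0 < C)
    (hC : ∀ q, d' q ≤ C * d q) : IsAlmostSureWinning M d T U → IsAlmostSureWinning M d' T U :=
  fun ⟨α, hα⟩ => ⟨α, fun ε hε =>
    let ⟨n, hT, hU⟩ := hα (ε / C) (div_pos hε hC0)
    ⟨n, one_sub_le_Mmass_of_le_mul hd hd'.2 hC0 hC hT, Mmass_eq_one_of_le_mul hd hd' hC hU⟩⟩

lemma IsLimitSureWinning.of_le_mul (hd : ∑ q, d q = 1) (hd' : IsDist d') (hC0 : 0 < C)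
    (hC : ∀ q, d' q ≤ C * d q) : IsLimitSureWinning M d T U → IsLimitSureWinning M d' T U :=
  fun h ε hε =>
    let ⟨α, n, hT, hU⟩ := h (ε / C) (div_pos hε hC0)
    ⟨α, n, one_sub_le_Mmass_of_le_mul hd hd'.2 hC0 hC hT, Mmass_eq_one_of_le_mul hd hd' hC hU⟩

lemma winning_of_pos_imp_pos (hd : IsDist d) (hd' : IsDist d') (hsupp : ∀ q, 0 < d' q → 0 < d q) :
    (IsSureWinning M d T U → IsSureWinning M d' T U) ∧
      (IsAlmostSureWinning M d T U → IsAlmostSureWinning M d' T U) ∧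
      (IsLimitSureWinning M d T U → IsLimitSureWinning M d' T U) := by
  obtain ⟨C, hC0, hC⟩ := exists_pos_le_mul_of_pos_imp_pos hd.1 hsupp
  exact ⟨.of_le_mul hd.2 hd' hC, .of_le_mul hd.2 hd' hC0 hC, .of_le_mul hd.2 hd' hC0 hC⟩

end WinningModes

theorem winning_modes_support_invariant_general {Q A : Type} [Fintype Q] [DecidableEq Q]
    [Fintype A]
    (M : MDP Q A) (T U : Finset Q)
    (d d' : Q → ℝ) (hd : IsDist d) (hd' : IsDist d')
    (hsupp : {q | 0 < d q} = {q | 0 < d' q}) :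
    ((∃ (α : Strat Q A) (n : ℕ), Mmass M d α n T = 1 ∧ Mmass M d α n U = 1) ↔
      (∃ (α : Strat Q A) (n : ℕ), Mmass M d' α n T = 1 ∧ Mmass M d' α n U = 1)) ∧
    ((∃ α : Strat Q A, ∀ ε : ℝ, 0 < ε → ∃ n : ℕ,
        1 - ε ≤ Mmass M d α n T ∧ Mmass M d α n U = 1) ↔
      (∃ α : Strat Q A, ∀ ε : ℝ, 0 < ε → ∃ n : ℕ,
        1 - ε ≤ Mmass M d' α n T ∧ Mmass M d' α n U = 1)) ∧
    ((∀ ε : ℝ, 0 < ε → ∃ (α : Strat Q A) (n : ℕ),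
        1 - ε ≤ Mmass M d α n T ∧ Mmass M d α n U = 1) ↔
      (∀ ε : ℝ, 0 < ε → ∃ (α : Strat Q A) (n : ℕ),
        1 - ε ≤ Mmass M d' α n T ∧ Mmass M d' α n U = 1)) := by
  obtain ⟨sure, almostSure, limitSure⟩ :=
    winning_of_pos_imp_pos (M := M) (T := T) (U := U) hd hd' fun q => (Set.ext_iff.mp hsupp q).2
  obtain ⟨sure', almostSure', limitSure'⟩ :=
    winning_of_pos_imp_pos (M := M) (T := T) (U := U) hd' hd fun q => (Set.ext_iff.mp hsupp q).1
  exact ⟨⟨sure, sure'⟩, ⟨almostSure, almostSure'⟩, ⟨limitSure, limitSure'⟩⟩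

/-- Whether an initial distribution is sure / almost-sure / limit-sure winning for
eventually synchronizing in `T` with exact support `U` depends only on its support. -/
theorem winning_modes_support_invariant {Q A : Type} [Fintype Q] [DecidableEq Q]
    [Fintype A] [Nonempty Q] [Nonempty A]
    (M : MDP Q A) (T U : Finset Q) (hTU : T ⊆ U)
    (d d' : Q → ℝ) (hd : IsDist d) (hd' : IsDist d')
    (hsupp : {q | 0 < d q} = {q | 0 < d' q}) :
    ((∃ (α : Strat Q A) (n : ℕ), Mmass M d α n T = 1 ∧ Mmass M d α n U = 1) ↔
      (∃ (α : Strat Q A) (n : ℕ), Mmass M d' α n T = 1 ∧ Mmass M d' α n U = 1)) ∧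
    ((∃ α : Strat Q A, ∀ ε : ℝ, 0 < ε → ∃ n : ℕ,
        1 - ε ≤ Mmass M d α n T ∧ Mmass M d α n U = 1) ↔
      (∃ α : Strat Q A, ∀ ε : ℝ, 0 < ε → ∃ n : ℕ,
        1 - ε ≤ Mmass M d' α n T ∧ Mmass M d' α n U = 1)) ∧
    ((∀ ε : ℝ, 0 < ε → ∃ (α : Strat Q A) (n : ℕ),
        1 - ε ≤ Mmass M d α n T ∧ Mmass M d α n U = 1) ↔
      (∀ ε : ℝ, 0 < ε → ∃ (α : Strat Q A) (n : ℕ),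
        1 - ε ≤ Mmass M d' α n T ∧ Mmass M d' α n U = 1)) :=
  winning_modes_support_invariant_general M T U d d' hd hd' hsupp
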